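/- arXiv:2308.16749 — 2 statements merged into one kernel-verified Lean document; each statement's English description precedes it below -/
import Mathlib

section
/- For all integers 0 ≤ j ≤ k one has Σ_{i=j}^{k} t_{k,i} · s_{i,j} = 1 if j = k and = 0 if j < k; that is, the lower-triangular matrices (t_{k,i}) and (s_{i,j}) are mutually inverse in one order. -/
/-!
For `j < k` the sum telescopes: `t_{k,i} s_{i,j} = B_i - B_{i-1}` for an explicit hypergeometric
term `B_i` with `t_{k,j} s_{j,j} = B_j` and `B_k = 0`. Comparing consecutive terms, this comes down to the
three-term identity `{a+b}{b+c} = {a}{c} + {b}{a+b+c}`, the `𝔮`-analogue of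
`sinh(a+b) sinh(b+c) = sinh a sinh c + sinh b sinh(a+b+c)`.
Nonvanishing of `{n}` for `n ≠ 0` is read off from the degree of `𝔮^n` in `ℚ(𝔮)`.
-/

open Finset

noncomputable section

/-- The field `F = ℚ(𝔮)` of rational functions over `ℚ` in an indeterminate `𝔮`. -/
abbrev F : Type := RatFunc ℚ

/-- The indeterminate `𝔮`. -/
noncomputable def qv : F := RatFunc.X

/-- `{n} = 𝔮^n - 𝔮^{-n}` for `n : ℤ`. -/
def brc (n : ℤ) : F := qv ^ n - qv ^ (-n)

/-- `[n] = {n}/{1}`. -/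
def brk (n : ℤ) : F := brc n / brc 1

/-- `{n}! = ∏_{j=1}^n {j}`. -/
def brcFac (n : ℕ) : F := ∏ j ∈ Finset.range n, brc ((j : ℤ) + 1)

/-- `[n]! = ∏_{j=1}^n [j]`. -/
def brkFac (n : ℕ) : F := ∏ j ∈ Finset.range n, brk ((j : ℤ) + 1)

/-- `q = 𝔮²`. -/
def qq : F := qv ^ 2

/-- The q-Pochhammer symbol `(x; q)_k = ∏_{j=0}^{k-1} (1 - x q^j)`. -/
def poch (x : F) (k : ℕ) : F := ∏ j ∈ Finset.range k, (1 - x * qq ^ j)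

/-- The q-binomial coefficient `[n choose i]_q`. -/
def qbinom (n i : ℕ) : F := poch qq n / (poch qq i * poch qq (n - i))

/-- `t_{k,i} = {2k+1}! {2i+2} / ({k+i+2}! {k-i}!)` for `0 ≤ i ≤ k`. -/
def tcoef (k i : ℕ) : F :=
  brcFac (2 * k + 1) * brc (2 * (i : ℤ) + 2) / (brcFac (k + i + 2) * brcFac (k - i))

/-- `s_{i,j} = (-1)^{i+j} [i+1+j]! / ([i-j]! [2j+1]!)` for `0 ≤ j ≤ i`. -/
def scoef (i j : ℕ) : F :=
  (-1) ^ (i + j) * brkFac (i + 1 + j) / (brkFac (i - j) * brkFac (2 * j + 1))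

lemma intDegree_qv_zpow (n : ℤ) : (qv ^ n).intDegree = n := by
  have hpow (m : ℕ) : (qv ^ m).intDegree = m := by
    rw [qv, ← RatFunc.algebraMap_X, ← map_pow, RatFunc.intDegree_polynomial,
      Polynomial.natDegree_X_pow]
  obtain ⟨m, rfl | rfl⟩ := Int.eq_nat_or_neg n
  · exact_mod_cast hpow m
  · rw [zpow_neg, RatFunc.intDegree_inv, zpow_natCast, hpow]

lemma brc_ne_zero {n : ℤ} (hn : n ≠ 0) : brc n ≠ 0 := by
  intro h
  have := congrArg RatFunc.intDegree (sub_eq_zero.mp h)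
  simp only [intDegree_qv_zpow] at this
  omega

lemma brc_add_mul_brc_add (a b c : ℤ) :
    brc (a + b) * brc (b + c) = brc a * brc c + brc b * brc (a + b + c) := by
  have hq : qv ≠ 0 := RatFunc.X_ne_zero
  simp only [brc, zpow_add₀ hq, zpow_neg]
  field_simp
  ring

@[simp]
lemma brcFac_ne_zero (n : ℕ) : brcFac n ≠ 0 :=
  prod_ne_zero_iff.mpr fun _ _ ↦ brc_ne_zero (by omega)

lemma brcFac_succ (n : ℕ) : brcFac (n + 1) = brcFac n * brc ↑(n + 1) := by
  rw [brcFac, prod_range_succ, Nat.cast_succ]; rfl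

lemma brcFac_zero : brcFac 0 = 1 := prod_range_zero _

lemma brkFac_eq_brcFac_div (n : ℕ) : brkFac n = brcFac n / brc 1 ^ n := by
  simp only [brkFac, brk, brcFac, prod_div_distrib, prod_const, card_range]

lemma scoef_eq_brcFac (i j : ℕ) (h : j ≤ i) :
    scoef i j = (-1) ^ (i + j) * brcFac (i + 1 + j) / (brcFac (i - j) * brcFac (2 * j + 1)) := by
  have hsum : i - j + (2 * j + 1) = i + 1 + j := by omega
  have h1 : brc 1 ≠ 0 := brc_ne_zero one_ne_zero
  simp only [scoef, brkFac_eq_brcFac_div, ← hsum, pow_add]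
  field_simp

/-- The partial sum `∑_{l=j}^{i} t_{k,l} s_{l,j}` in closed form, for `j < k` and `j ≤ i ≤ k`.
The factor `{k-i} / {k-i}!` stands for `1 / {k-i-1}!`, so that it vanishes at `i = k`. -/
def tsPartialSum (j k i : ℕ) : F :=
  (-1) ^ (i + j) * brcFac (2 * k + 1) * brcFac (i + j + 2) * brc ↑(k - i) /
    (brcFac (k + i + 2) * brcFac (k - i) * brcFac (i - j) * brcFac (2 * j + 1) * brc ↑(k - j))

lemma tsPartialSum_succ_sub {j i k : ℕ} (hji : j ≤ i) (hik : i < k) :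
    tsPartialSum j k (i + 1) - tsPartialSum j k i = tcoef k (i + 1) * scoef (i + 1) j := by
  obtain ⟨m, rfl⟩ := Nat.exists_eq_add_of_le hji
  obtain ⟨r, rfl⟩ := Nat.exists_eq_add_of_lt hik
  rw [scoef_eq_brcFac _ _ (by omega), tcoef, tsPartialSum, tsPartialSum,
    show j + m + r + 1 - (j + m + 1) = r by omega, show j + m + 1 - j = m + 1 by omega,
    show j + m + r + 1 - (j + m) = r + 1 by omega, show j + m - j = m by omega,
    show j + m + r + 1 - j = m + r + 1 by omega]
  rw [show j + m + 1 + j + 2 = (j + m + 1 + 1 + j) + 1 by omega, brcFac_succ (j + m + 1 + 1 + j),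
    show j + m + r + 1 + (j + m + 1) + 2 = (j + m + r + 1 + (j + m) + 2) + 1 by omega,
    brcFac_succ (j + m + r + 1 + (j + m) + 2), brcFac_succ r, brcFac_succ m,
    show j + m + 1 + 1 + j = j + m + j + 2 by omega, show j + m + 1 + j = j + m + j + 1 by omega,
    pow_succ]
  have h1 : brc ↑(m + 1) ≠ 0 := brc_ne_zero (by omega)
  have h2 : brc ↑(r + 1) ≠ 0 := brc_ne_zero (by omega)
  have h3 : brc ↑(m + r + 1) ≠ 0 := brc_ne_zero (by omega)
  have h4 : brc ↑(j + m + r + 1 + (j + m) + 2 + 1) ≠ 0 := brc_ne_zero (by omega)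
  push_cast at *
  field_simp
  -- what is left is `{2n+2}{k-j} = {n+j+2}{k-n} + {k+n+2}{n-j}` for `n = j + m + 1`
  linear_combination (norm := ring_nf) brc_add_mul_brc_add (2 * j + m + 3) (m + 1) r

lemma tsPartialSum_left {j k : ℕ} (hjk : j < k) :
    tsPartialSum j k j = tcoef k j * scoef j j := by
  obtain ⟨r, rfl⟩ := Nat.exists_eq_add_of_lt hjk
  rw [scoef_eq_brcFac _ _ le_rfl, tcoef, tsPartialSum, Nat.sub_self,
    show j + r + 1 - j = r + 1 by omega, show j + j + 2 = j + 1 + j + 1 by omega,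
    brcFac_succ (j + 1 + j), brcFac_succ r, ← two_mul, pow_mul, neg_one_sq, one_pow,
    show ((j + 1 + j + 1 : ℕ) : ℤ) = 2 * j + 2 by push_cast; ring]
  have h1 : brc ↑(r + 1) ≠ 0 := brc_ne_zero (by omega)
  have h2 : brc (2 * ↑j + 2) ≠ 0 := brc_ne_zero (by omega)
  field_simp

lemma tcoef_mul_scoef_self (k : ℕ) : tcoef k k * scoef k k = 1 := by
  rw [scoef_eq_brcFac _ _ le_rfl, tcoef, Nat.sub_self, show k + k + 2 = k + 1 + k + 1 by omega,
    brcFac_succ (k + 1 + k), ← two_mul, pow_mul, neg_one_sq, one_pow,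
    show 2 * k + 1 = k + 1 + k by omega, brcFac_zero,
    show ((k + 1 + k + 1 : ℕ) : ℤ) = 2 * k + 2 by push_cast; ring]
  have h : brc (2 * ↑k + 2) ≠ 0 := brc_ne_zero (by omega)
  field_simp

lemma tsPartialSum_right (j k : ℕ) : tsPartialSum j k k = 0 := by
  simp [tsPartialSum, brc]

lemma sum_Icc_tcoef_mul_scoef {j k i : ℕ} (hjk : j < k) (hji : j ≤ i) (hik : i ≤ k) :
    ∑ l ∈ Icc j i, tcoef k l * scoef l j = tsPartialSum j k i := by
  induction i, hji using Nat.le_induction with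
  | base => rw [Icc_self, sum_singleton, tsPartialSum_left hjk]
  | succ i hji ih =>
    rw [sum_Icc_succ_top (by omega), ih (by omega), ← tsPartialSum_succ_sub hji (by omega)]
    ring

/-- For `0 ≤ j ≤ k`, `Σ_{i=j}^k t_{k,i} s_{i,j}` is `1` if `j = k` and `0` if `j < k`. -/
theorem stmt2 (j k : ℕ) (hjk : j ≤ k) :
    ∑ i ∈ Finset.Icc j k, tcoef k i * scoef i j = if j = k then 1 else 0 := by
  obtain rfl | hlt := hjk.eq_or_lt
  · rw [if_pos rfl, Icc_self, sum_singleton, tcoef_mul_scoef_self]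
  · rw [if_neg hlt.ne, sum_Icc_tcoef_mul_scoef hlt hjk le_rfl, tsPartialSum_right]
end
end

section
/- For every integer k ≥ 0 and every odd positive integer s = 2m−1, the element {k}! · c̃'_{k,s/2} of F lies in the subring ℤ[𝔮, 𝔮^{−1}] of integer Laurent polynomials in 𝔮; equivalently, c̃'_{k,s/2} ∈ (1/{k}!) ℤ[𝔮, 𝔮^{−1}]. -/
open Finset

noncomputable section

/-- `c̃'_{k,s/2} = {k}! Σ_{l=0}^k 𝔮^{s l(l+1)} {2l+1} / ({k+l+1}! {k-l}!)` for `s` an odd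
positive integer. -/
def ctil (k s : ℕ) : F :=
  brcFac k * ∑ l ∈ Finset.range (k + 1),
    qv ^ (s * l * (l + 1)) * brc (2 * (l : ℤ) + 1) / (brcFac (k + l + 1) * brcFac (k - l))

/-!
Put `q = 𝔮²`. Since `{n} = -𝔮^{-n} (1 - q^n)`, we have `{n}! = (-1)^n 𝔮^{-n(n+1)/2} (q;q)_n`, and
for `s = 2m+1` this turns `{k}! c̃'_{k,s/2}` into `𝔮^k (q;q)_k² G_m(k)`, where
`G_m(k) = Σ_l q^{(m+1)l² + ml} (1 - q^{2l+1}) / ((q;q)_{k-l} (q;q)_{k+l+1})`.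
These sums form a Bailey chain: `G_0(k) = 1/(q;q)_k²` by telescoping, and
`G_{m+1}(k) = Σ_j q^{j(j+1)} / (q;q)_{k-j} · G_m(j)` by the Bailey lemma, which here comes down
to the q-binomial identity `Σ_i [n,i]_q q^{i²} b^i (b q^{i+1}; q)_{n-i} = 1`.
As `(q;q)_k² / (q;q)_{k-j} = [k,j]_q² (q;q)_{k-j} (q;q)_j²`, induction on `m` shows that
`(q;q)_k² G_m(k)` is a polynomial in `q` with integer coefficients.
-/

local notation "ℤ[𝔮±]" => Subring.closure ({qv, qv⁻¹} : Set F)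

lemma qv_ne_zero : qv ≠ 0 := RatFunc.X_ne_zero

lemma qv_pow_ne_one {n : ℕ} (hn : n ≠ 0) : qv ^ n ≠ 1 := by
  intro h
  have h' : algebraMap (Polynomial ℚ) F (Polynomial.X ^ n) = algebraMap (Polynomial ℚ) F 1 := by
    simpa [qv] using h
  simpa [hn] using congrArg Polynomial.natDegree (RatFunc.algebraMap_injective ℚ h')

lemma one_sub_qq_pow_ne_zero {n : ℕ} (hn : n ≠ 0) : 1 - qq ^ n ≠ 0 := by
  rw [qq, ← pow_mul]
  exact sub_ne_zero.mpr (qv_pow_ne_one (by positivity)).symm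

lemma poch_zero (x : F) : poch x 0 = 1 := prod_range_zero _

lemma poch_succ (x : F) (n : ℕ) : poch x (n + 1) = poch x n * (1 - x * qq ^ n) :=
  prod_range_succ _ n

lemma poch_succ' (x : F) (n : ℕ) : poch x (n + 1) = (1 - x) * poch (x * qq) n := by
  simp only [poch, prod_range_succ', pow_zero, mul_one, pow_succ', mul_assoc]
  ring

lemma poch_add (x : F) (a b : ℕ) : poch x (a + b) = poch x a * poch (x * qq ^ a) b := by
  simp only [poch, prod_range_add, mul_assoc, ← pow_add]

lemma poch_qq_add (a b : ℕ) : poch qq (a + b) = poch qq a * poch (qq ^ (a + 1)) b := by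
  rw [poch_add, ← pow_succ']

lemma poch_qq_succ (n : ℕ) : poch qq (n + 1) = poch qq n * (1 - qq ^ (n + 1)) := by
  rw [poch_succ, ← pow_succ']

lemma poch_qq_ne_zero (n : ℕ) : poch qq n ≠ 0 :=
  prod_ne_zero_iff.mpr fun j _ ↦ by
    rw [← pow_succ']
    exact one_sub_qq_pow_ne_zero j.succ_ne_zero

lemma qq_mem : qq ∈ ℤ[𝔮±] := pow_mem (Subring.subset_closure (by simp)) 2

lemma poch_qq_mem (n : ℕ) : poch qq n ∈ ℤ[𝔮±] :=
  prod_mem fun j _ ↦ sub_mem (one_mem _) (mul_mem qq_mem (pow_mem qq_mem j))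

lemma qbinom_zero (n : ℕ) : qbinom n 0 = 1 := by
  rw [qbinom, Nat.sub_zero, poch_zero, one_mul, div_self (poch_qq_ne_zero n)]

lemma qbinom_self (n : ℕ) : qbinom n n = 1 := by
  rw [qbinom, Nat.sub_self, poch_zero, mul_one, div_self (poch_qq_ne_zero n)]

lemma qbinom_mul_poch_mul_poch {n i : ℕ} :
    qbinom n i * (poch qq i * poch qq (n - i)) = poch qq n :=
  div_mul_cancel₀ _ (mul_ne_zero (poch_qq_ne_zero i) (poch_qq_ne_zero (n - i)))

lemma qbinom_succ_succ {n i : ℕ} (h : i < n) :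
    qbinom (n + 1) (i + 1) = qbinom n i + qq ^ (i + 1) * qbinom n (i + 1) := by
  obtain ⟨d, rfl⟩ : ∃ d, n = i + 1 + d := ⟨n - (i + 1), by omega⟩
  rw [qbinom, qbinom, qbinom, show i + 1 + d + 1 - (i + 1) = d + 1 by omega,
    show i + 1 + d - i = d + 1 by omega, Nat.add_sub_cancel_left, poch_qq_succ (i + 1 + d),
    poch_qq_succ i, poch_qq_succ d]
  have := poch_qq_ne_zero (i + 1 + d)
  have := poch_qq_ne_zero i
  have := poch_qq_ne_zero d
  have := one_sub_qq_pow_ne_zero (n := i + 1) (by omega)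
  have := one_sub_qq_pow_ne_zero (n := d + 1) (by omega)
  have := one_sub_qq_pow_ne_zero (n := i + 1 + d + 1) (by omega)
  field_simp
  ring

lemma qbinom_mem {n i : ℕ} (h : i ≤ n) : qbinom n i ∈ ℤ[𝔮±] := by
  induction n generalizing i with
  | zero => simp [Nat.le_zero.mp h, qbinom_zero]
  | succ n ih =>
    rcases i with _ | i
    · simp [qbinom_zero]
    rcases (Nat.lt_succ_iff.mp h).lt_or_eq with h | rfl
    · rw [qbinom_succ_succ h]
      exact add_mem (ih h.le) (mul_mem (pow_mem qq_mem _) (ih h))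
    · simp [qbinom_self]

lemma sum_range_add_two_of_shift {M : Type*} [AddCommMonoid M] {n : ℕ} (t u v : ℕ → M)
    (h_zero : t 0 = u 0) (h_mid : ∀ i < n, t (i + 1) = v i + u (i + 1))
    (h_top : t (n + 1) = v n) :
    ∑ i ∈ range (n + 2), t i = ∑ i ∈ range (n + 1), (u i + v i) := by
  rw [sum_add_distrib, sum_range_succ t (n + 1), sum_range_succ' t n, sum_range_succ' u n,
    sum_range_succ v n, sum_congr rfl fun i hi ↦ h_mid i (mem_range.mp hi), sum_add_distrib,
    h_zero, h_top]
  abel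

lemma sum_qbinom_mul_poch_eq_one (n : ℕ) (b : F) :
    ∑ i ∈ range (n + 1), qbinom n i * qq ^ (i * i) * b ^ i * poch (b * qq ^ (i + 1)) (n - i)
      = 1 := by
  induction n generalizing b with
  | zero => simp [qbinom_zero, poch_zero]
  | succ n ih =>
    -- the sum for `n + 1` and `b` is the sum for `n` and `b * q`, split termwise by Pascal's rule
    set s : ℕ → F := fun i ↦
      qbinom n i * qq ^ (i * i) * (b * qq) ^ i * poch (b * qq ^ (i + 2)) (n - i)
    have hs : ∑ i ∈ range (n + 1), s i = 1 := by
      simpa only [s, mul_assoc b qq, ← pow_succ'] using ih (b * qq)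
    rw [← hs, ← sum_congr rfl fun i _ ↦
      (show (1 - b * qq ^ (i + 1)) * s i + b * qq ^ (i + 1) * s i = s i by ring)]
    apply sum_range_add_two_of_shift
    · simp [s, qbinom_zero, poch_succ', sq, mul_assoc]
    · intro i hi
      have hp : poch (b * qq ^ (i + 2)) (n - i)
          = (1 - b * qq ^ (i + 2)) * poch (b * qq ^ (i + 3)) (n - (i + 1)) := by
        rw [show n - i = n - (i + 1) + 1 by omega, poch_succ', mul_assoc, ← pow_succ]
      simp only [s, qbinom_succ_succ hi, Nat.add_sub_add_right, hp]
      ring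
    · simp only [s, qbinom_self, one_mul, tsub_self, poch_zero, mul_one]
      ring

lemma sum_qq_pow_div_poch (l n : ℕ) :
    ∑ i ∈ range (n + 1),
        qq ^ ((l + i) * (l + i + 1)) / (poch qq (n - i) * poch qq i * poch qq (2 * l + i + 1))
      = qq ^ (l * (l + 1)) / (poch qq n * poch qq (n + 2 * l + 1)) := by
  rw [← mul_one (_ / _), ← sum_qbinom_mul_poch_eq_one n (qq ^ (2 * l + 1)), mul_sum]
  refine sum_congr rfl fun i hi ↦ ?_
  have hin : i ≤ n := Nat.lt_succ_iff.mp (mem_range.mp hi)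
  have hsplit : poch qq (n + 2 * l + 1)
      = poch qq (2 * l + i + 1) * poch (qq ^ (2 * l + i + 2)) (n - i) := by
    rw [show n + 2 * l + 1 = 2 * l + i + 1 + (n - i) by omega, poch_qq_add]
  have := right_ne_zero_of_mul (hsplit ▸ poch_qq_ne_zero _)
  have := poch_qq_ne_zero n
  have := poch_qq_ne_zero i
  have := poch_qq_ne_zero (n - i)
  have := poch_qq_ne_zero (2 * l + i + 1)
  rw [hsplit, qbinom, ← pow_add, show 2 * l + 1 + (i + 1) = 2 * l + i + 2 by omega,
    show (l + i) * (l + i + 1) = l * (l + 1) + i * i + (2 * l + 1) * i by ring, pow_add, pow_add]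
  field_simp
  ring

def baileySum (m k : ℕ) : F :=
  ∑ l ∈ range (k + 1), qq ^ ((m + 1) * l * l + m * l) * (1 - qq ^ (2 * l + 1))
    / (poch qq (k - l) * poch qq (k + l + 1))

lemma baileySum_zero (k : ℕ) : baileySum 0 k = 1 / poch qq k ^ 2 := by
  set g : ℕ → F := fun l ↦ qq ^ (l * l) / (poch qq (k - l) * poch qq (k + l))
  have h_step : ∀ l ∈ range k, qq ^ ((0 + 1) * l * l + 0 * l) * (1 - qq ^ (2 * l + 1))
      / (poch qq (k - l) * poch qq (k + l + 1)) = g l - g (l + 1) := by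
    intro l hl
    obtain ⟨d, rfl⟩ : ∃ d, k = l + 1 + d := ⟨k - (l + 1), by have := mem_range.mp hl; omega⟩
    simp only [g]
    rw [show l + 1 + d - l = d + 1 by omega, Nat.add_sub_cancel_left,
      show l + 1 + d + l + 1 = 2 * l + 1 + d + 1 by omega,
      show l + 1 + d + l = 2 * l + 1 + d by omega,
      show l + 1 + d + (l + 1) = 2 * l + 1 + d + 1 by omega,
      poch_qq_succ d, poch_qq_succ (2 * l + 1 + d)]
    have := poch_qq_ne_zero d
    have := poch_qq_ne_zero (2 * l + 1 + d)
    have := one_sub_qq_pow_ne_zero (n := d + 1) (by omega)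
    have := one_sub_qq_pow_ne_zero (n := 2 * l + 1 + d + 1) (by omega)
    field_simp
    ring
  have h_last : qq ^ ((0 + 1) * k * k + 0 * k) * (1 - qq ^ (2 * k + 1))
      / (poch qq (k - k) * poch qq (k + k + 1)) = g k := by
    have := one_sub_qq_pow_ne_zero (n := k + k + 1) (by omega)
    simp only [g, Nat.sub_self, poch_qq_succ, two_mul]
    field_simp
    ring
  rw [baileySum, sum_range_succ, sum_congr rfl h_step, sum_range_sub', h_last, sub_add_cancel]
  simp [g, sq]

lemma baileySum_succ (m k : ℕ) : baileySum (m + 1) k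
    = ∑ j ∈ range (k + 1), qq ^ (j * (j + 1)) / poch qq (k - j) * baileySum m j := by
  simp only [baileySum, mul_sum, range_eq_Ico]
  rw [← sum_Ico_Ico_comm]
  refine sum_congr rfl fun l hl ↦ ?_
  have hlk : l ≤ k := Nat.lt_succ_iff.mp (mem_Ico.mp hl).2
  have h_term : ∀ i ∈ range (k + 1 - l),
      qq ^ ((l + i) * (l + i + 1)) / poch qq (k - (l + i)) * (qq ^ ((m + 1) * l * l + m * l)
        * (1 - qq ^ (2 * l + 1)) / (poch qq (l + i - l) * poch qq (l + i + l + 1)))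
      = qq ^ ((m + 1) * l * l + m * l) * (1 - qq ^ (2 * l + 1)) * (qq ^ ((l + i) * (l + i + 1))
        / (poch qq (k - l - i) * poch qq i * poch qq (2 * l + i + 1))) := by
    intro i _
    rw [Nat.add_sub_cancel_left, show l + i + l + 1 = 2 * l + i + 1 by omega, Nat.sub_sub]
    ring
  rw [sum_Ico_eq_sum_range, sum_congr rfl h_term, ← mul_sum, show k + 1 - l = k - l + 1 by omega,
    sum_qq_pow_div_poch, show k - l + 2 * l + 1 = k + l + 1 by omega]
  ring

lemma poch_sq_mul_baileySum_mem (m k : ℕ) : poch qq k ^ 2 * baileySum m k ∈ ℤ[𝔮±] := by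
  induction m generalizing k with
  | zero =>
    rw [baileySum_zero, mul_one_div_cancel (pow_ne_zero 2 (poch_qq_ne_zero k))]
    exact one_mem _
  | succ m ih =>
    rw [baileySum_succ, mul_sum]
    refine sum_mem fun j hj ↦ ?_
    have hjk : j ≤ k := Nat.lt_succ_iff.mp (mem_range.mp hj)
    have h_split : poch qq k ^ 2 * (qq ^ (j * (j + 1)) / poch qq (k - j) * baileySum m j)
        = qq ^ (j * (j + 1)) * (qbinom k j ^ 2 * poch qq (k - j))
          * (poch qq j ^ 2 * baileySum m j) := by
      have := poch_qq_ne_zero (k - j)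
      rw [← qbinom_mul_poch_mul_poch (n := k) (i := j)]
      field_simp
    rw [h_split]
    exact mul_mem (mul_mem (pow_mem qq_mem _)
      (mul_mem (pow_mem (qbinom_mem hjk) 2) (poch_qq_mem _))) (ih j)

lemma brc_natCast (n : ℕ) : brc n = (qq ^ n - 1) / qv ^ n := by
  have := qv_ne_zero
  rw [brc, zpow_natCast, zpow_neg, zpow_natCast, qq]
  field_simp
  ring

lemma brcFac_eq (n : ℕ) : brcFac n = (-1) ^ n * poch qq n / qv ^ (n + 1).choose 2 := by
  induction n with
  | zero => simp [brcFac, poch_zero]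
  | succ n ih =>
    have := qv_ne_zero
    rw [brcFac, prod_range_succ, ← brcFac, ih, show (n : ℤ) + 1 = (n + 1 : ℕ) by push_cast; rfl,
      brc_natCast, poch_qq_succ, Nat.choose_succ_succ (n + 1) 1, Nat.choose_one_right, pow_add]
    field_simp
    ring

lemma choose_two_mul_two (n : ℕ) : (n + 1).choose 2 * 2 = (n + 1) * n := by
  simpa [Nat.choose_one_right] using (Nat.add_one_mul_choose_eq n 1).symm

lemma brcFac_sq_div {k l : ℕ} (hlk : l ≤ k) :
    brcFac k ^ 2 / (brcFac (k + l + 1) * brcFac (k - l))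
      = -qv ^ (l * (l + 1) + k + 1) * poch qq k ^ 2 / (poch qq (k + l + 1) * poch qq (k - l)) := by
  obtain ⟨d, rfl⟩ := Nat.exists_eq_add_of_le hlk
  have h_exp : (l + d + l + 1 + 1).choose 2 + (d + 1).choose 2
      = 2 * (l + d + 1).choose 2 + (l * (l + 1) + (l + d) + 1) := by
    have := choose_two_mul_two (l + d + l + 1)
    have := choose_two_mul_two d
    have := choose_two_mul_two (l + d)
    linarith
  have h_pow : qv ^ (l + d + l + 1 + 1).choose 2 * qv ^ (d + 1).choose 2
      = (qv ^ (l + d + 1).choose 2) ^ 2 * qv ^ (l * (l + 1) + (l + d) + 1) := by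
    rw [← pow_add, ← pow_mul, ← pow_add, h_exp, mul_comm]
  have h_sign : (-1 : F) ^ (l + d + l + 1) * (-1) ^ d = -((-1) ^ (l + d)) ^ 2 := by
    rw [← pow_add, ← pow_mul, Odd.neg_one_pow ⟨l + d, by ring⟩, Even.neg_one_pow ⟨l + d, by ring⟩]
  have := qv_ne_zero
  have := poch_qq_ne_zero (l + d + l + 1)
  have := poch_qq_ne_zero d
  rw [Nat.add_sub_cancel_left, brcFac_eq, brcFac_eq, brcFac_eq]
  field_simp
  linear_combination ((-1) ^ (l + d)) ^ 2 * poch qq (l + d) ^ 2 * h_pow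
    + poch qq (l + d) ^ 2 * (qv ^ (l + d + 1).choose 2) ^ 2 * qv ^ (l * (l + 1) + (l + d) + 1)
      * h_sign

lemma brcFac_mul_ctil (k m : ℕ) :
    brcFac k * ctil k (2 * m + 1) = qv ^ k * (poch qq k ^ 2 * baileySum m k) := by
  rw [ctil, baileySum, ← mul_assoc, mul_sum, mul_sum, mul_sum]
  refine sum_congr rfl fun l hl ↦ ?_
  have hlk : l ≤ k := Nat.lt_succ_iff.mp (mem_range.mp hl)
  have := qv_ne_zero
  have := poch_qq_ne_zero (k + l + 1)
  have := poch_qq_ne_zero (k - l)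
  rw [show brcFac k * brcFac k * (qv ^ ((2 * m + 1) * l * (l + 1)) * brc (2 * (l : ℤ) + 1)
      / (brcFac (k + l + 1) * brcFac (k - l))) = qv ^ ((2 * m + 1) * l * (l + 1))
      * brc (2 * l + 1 : ℕ) * (brcFac k ^ 2 / (brcFac (k + l + 1) * brcFac (k - l))) by
      push_cast; ring, brcFac_sq_div hlk, brc_natCast, qq]
  field_simp
  ring

/-- For `k ≥ 0` and odd positive `s = 2m-1`, `{k}! ⬝ c̃'_{k,s/2}` is an integer Laurent
polynomial in `𝔮`. -/
theorem stmt10 (k m : ℕ) (hm : 1 ≤ m) :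
    brcFac k * ctil k (2 * m - 1) ∈ Subring.closure ({qv, qv⁻¹} : Set F) := by
  obtain ⟨m, rfl⟩ := Nat.exists_eq_add_of_le' hm
  rw [show 2 * (m + 1) - 1 = 2 * m + 1 by omega, brcFac_mul_ctil]
  exact mul_mem (pow_mem (Subring.subset_closure (by simp)) k) (poch_sq_mul_baileySum_mem m k)
end
end
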